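/- arXiv:2111.05582 — 2 statements merged into one kernel-verified Lean document; each statement's English description precedes it below -/
import Mathlib

section
/- Let t₀ = c ε₀² with c > 0 fixed, a ∈ (0,1), ℓ > a+1, and suppose on a compact set K, φ(·, t₀) ≥ 0 satisfies: (1) φ(x,t₀) ≤ C₂ t₀^ℓ d(x,Σ)^{-2(ℓ+1)} for x ∉ Σ(ε₀); (2) φ(·,t₀) ≤ a t₀^{-1} everywhere; (3) the measure μ satisfies μ(Σ(r)) ≤ C r^{2+a} for 0 < r ≤ b and μ(K) ≤ V₀. Then ∫_K φ(·,t₀) dμ ≤ C₈ ε₀^a ≤ C₉ t₀^{a/2} for constants C₈, C₉ independent of t₀. -/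
open MeasureTheory


lemma setLIntegral_le_const_mul_meas' {X : Type*} [MeasurableSpace X] (μ : Measure X)
    (s : Set X) (f : X → ENNReal) (c : ENNReal) (h : ∀ x ∈ s, f x ≤ c) :
    ∫⁻ x in s, f x ∂μ ≤ c * μ s := by
  rw [lintegral]
  refine iSup₂_le fun g hg => ?_
  rw [SimpleFunc.lintegral]
  calc ∑ y ∈ g.range, y * (μ.restrict s) (g ⁻¹' {y})
      ≤ ∑ y ∈ g.range, c * (μ.restrict s) (g ⁻¹' {y}) := by
        refine Finset.sum_le_sum fun y _ => ?_
        rcases eq_or_ne ((μ.restrict s) (g ⁻¹' {y})) 0 with h0 | h0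
        · simp [h0]
        · refine mul_le_mul_left ?_ _
          rw [Measure.restrict_apply (g.measurableSet_fiber y)] at h0
          obtain ⟨x, hx⟩ : (g ⁻¹' {y} ∩ s).Nonempty := by
            rw [Set.nonempty_iff_ne_empty]
            intro he
            exact h0 (by simp [he])
          calc y = g x := hx.1.symm
            _ ≤ f x := hg x
            _ ≤ c := h x hx.2
    _ = c * ∑ y ∈ g.range, (μ.restrict s) (g ⁻¹' {y}) := (Finset.mul_sum _ _ _).symm
    _ = c * (μ.restrict s) Set.univ := by
        rw [SimpleFunc.sum_range_measure_preimage_singleton]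
    _ = c * μ s := by rw [Measure.restrict_apply_univ]

lemma rpow_swap' (k : ℕ) (r : ℝ) : ((2:ℝ)^k) ^ r = ((2:ℝ) ^ r) ^ k := by
  rw [← Real.rpow_natCast 2 k, ← Real.rpow_mul (by norm_num), mul_comm,
    Real.rpow_mul (by norm_num), Real.rpow_natCast]

lemma stmt6_ineq1 (a ℓ c C C₂ : ℝ) (hc : 0 < c) (ε₀ : ℝ) (hε : 0 < ε₀) (k : ℕ) :
    C₂ * (c * ε₀^(2:ℕ)) ^ ℓ * ((2^k * ε₀) ^ (-(2*(ℓ+1)))) * (C * ((2^(k+1) * ε₀)) ^ (2+a))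
      ≤ (C₂ * C * c ^ ℓ * (2:ℝ) ^ (2+a)) * ((2:ℝ) ^ (a - 2*ℓ)) ^ k * ε₀ ^ a := by
  have h2k : (0:ℝ) < 2 ^ k := by positivity
  have e1 : (c * ε₀^(2:ℕ)) ^ ℓ = c ^ ℓ * ε₀ ^ (2*ℓ) := by
    rw [Real.mul_rpow hc.le (by positivity), ← Real.rpow_natCast ε₀ 2, ← Real.rpow_mul hε.le]
    norm_num
  have e2 : ((2:ℝ)^k * ε₀) ^ (-(2*(ℓ+1)))
      = ((2:ℝ) ^ (-(2*(ℓ+1)))) ^ k * ε₀ ^ (-(2*(ℓ+1))) := by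
    rw [Real.mul_rpow h2k.le hε.le, rpow_swap']
  have e3 : ((2:ℝ)^(k+1) * ε₀) ^ (2+a)
      = (2:ℝ) ^ (2+a) * ((2:ℝ) ^ (2+a)) ^ k * ε₀ ^ (2+a) := by
    rw [pow_succ, mul_comm ((2:ℝ)^k) 2, mul_assoc, Real.mul_rpow (by norm_num) (by positivity),
      Real.mul_rpow h2k.le hε.le, rpow_swap']
    ring
  rw [e1, e2, e3]
  refine le_of_eq ?_
  have e4 : ((2:ℝ) ^ (-(2*(ℓ+1)))) ^ k * ((2:ℝ) ^ (2+a)) ^ k = ((2:ℝ) ^ (a - 2*ℓ)) ^ k := by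
    rw [← mul_pow, ← Real.rpow_add (by norm_num)]
    ring_nf
  have e5 : ε₀ ^ (2*ℓ) * ε₀ ^ (-(2*(ℓ+1))) * ε₀ ^ (2+a) = ε₀ ^ a := by
    rw [← Real.rpow_add hε, ← Real.rpow_add hε]
    ring_nf
  calc C₂ * (c ^ ℓ * ε₀ ^ (2*ℓ)) * (((2:ℝ) ^ (-(2*(ℓ+1)))) ^ k * ε₀ ^ (-(2*(ℓ+1))))
        * (C * ((2:ℝ) ^ (2+a) * ((2:ℝ) ^ (2+a)) ^ k * ε₀ ^ (2+a)))
      = (C₂ * C * c ^ ℓ * (2:ℝ) ^ (2+a))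
        * (((2:ℝ) ^ (-(2*(ℓ+1)))) ^ k * ((2:ℝ) ^ (2+a)) ^ k)
        * (ε₀ ^ (2*ℓ) * ε₀ ^ (-(2*(ℓ+1))) * ε₀ ^ (2+a)) := by ring
    _ = (C₂ * C * c ^ ℓ * (2:ℝ) ^ (2+a)) * ((2:ℝ) ^ (a - 2*ℓ)) ^ k * ε₀ ^ a := by
        rw [e4, e5]

lemma stmt6_ineq2 (a ℓ c b C₂ V₀ : ℝ) (ha₀ : 0 < a) (hc : 0 < c)
    (hb₀ : 0 < b) (hC₂ : 0 < C₂) (hV₀ : 0 < V₀) (ε₀ : ℝ) (hε : 0 < ε₀) (k : ℕ)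
    (hk : b / 2 ≤ 2^k * ε₀) :
    C₂ * (c * ε₀^(2:ℕ)) ^ ℓ * ((2^k * ε₀) ^ (-(2*(ℓ+1)))) * V₀
      ≤ (C₂ * c ^ ℓ * V₀ * (b/2) ^ (-(2+a))) * ((2:ℝ) ^ (a - 2*ℓ)) ^ k * ε₀ ^ a := by
  have h2k : (0:ℝ) < 2 ^ k := by positivity
  have hE : (0:ℝ) < 2^k * ε₀ := by positivity
  have e1 : (c * ε₀^(2:ℕ)) ^ ℓ = c ^ ℓ * ε₀ ^ (2*ℓ) := by
    rw [Real.mul_rpow hc.le (by positivity), ← Real.rpow_natCast ε₀ 2,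
      ← Real.rpow_mul hε.le]
    norm_num
  have e2 : ((2:ℝ)^k * ε₀) ^ (-(2*(ℓ+1)))
      = ((2:ℝ)^k * ε₀) ^ (a - 2*ℓ) * ((2:ℝ)^k * ε₀) ^ (-(2+a)) := by
    rw [← Real.rpow_add hE]
    ring_nf
  have e3 : ((2:ℝ)^k * ε₀) ^ (a - 2*ℓ) = ((2:ℝ) ^ (a - 2*ℓ)) ^ k * ε₀ ^ (a - 2*ℓ) := by
    rw [Real.mul_rpow h2k.le hε.le, rpow_swap']
  have e4 : ((2:ℝ)^k * ε₀) ^ (-(2+a)) ≤ (b/2) ^ (-(2+a)) :=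
    Real.rpow_le_rpow_of_nonpos (by positivity) hk (by linarith)
  have e5 : ε₀ ^ (2*ℓ) * ε₀ ^ (a - 2*ℓ) = ε₀ ^ a := by
    rw [← Real.rpow_add hε]
    ring_nf
  calc C₂ * (c * ε₀^(2:ℕ)) ^ ℓ * ((2^k * ε₀) ^ (-(2*(ℓ+1)))) * V₀
      = (C₂ * c ^ ℓ * V₀ * ((2:ℝ)^k * ε₀) ^ (-(2+a))) * ((2:ℝ) ^ (a - 2*ℓ)) ^ k
          * (ε₀ ^ (2*ℓ) * ε₀ ^ (a - 2*ℓ)) := by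
        rw [e1, e2, e3]; ring
    _ = (C₂ * c ^ ℓ * V₀ * ((2:ℝ)^k * ε₀) ^ (-(2+a))) * ((2:ℝ) ^ (a - 2*ℓ)) ^ k * ε₀ ^ a := by
        rw [e5]
    _ ≤ (C₂ * c ^ ℓ * V₀ * (b/2) ^ (-(2+a))) * ((2:ℝ) ^ (a - 2*ℓ)) ^ k * ε₀ ^ a := by
        have h1 : (0:ℝ) ≤ ((2:ℝ) ^ (a - 2*ℓ)) ^ k * ε₀ ^ a := by positivity
        have h2 : (0:ℝ) ≤ C₂ * c ^ ℓ * V₀ := by positivity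
        calc (C₂ * c ^ ℓ * V₀ * ((2:ℝ)^k * ε₀) ^ (-(2+a))) * ((2:ℝ) ^ (a - 2*ℓ)) ^ k * ε₀ ^ a
            = (C₂ * c ^ ℓ * V₀) * (((2:ℝ)^k * ε₀) ^ (-(2+a)))
                * (((2:ℝ) ^ (a - 2*ℓ)) ^ k * ε₀ ^ a) := by ring
          _ ≤ (C₂ * c ^ ℓ * V₀) * ((b/2) ^ (-(2+a))) * (((2:ℝ) ^ (a - 2*ℓ)) ^ k * ε₀ ^ a) :=
              mul_le_mul_of_nonneg_right (mul_le_mul_of_nonneg_left e4 h2) h1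
          _ = (C₂ * c ^ ℓ * V₀ * (b/2) ^ (-(2+a))) * ((2:ℝ) ^ (a - 2*ℓ)) ^ k * ε₀ ^ a := by ring

set_option maxHeartbeats 1600000 in
/-- Key integral estimate.  Let t₀ = c ε₀², a ∈ (0,1), ℓ > a+1.  If on a
compact set K a nonnegative function φ(·,t₀) satisfies
(1) φ(x,t₀) ≤ C₂ t₀^ℓ d(x,Σ)^(-2(ℓ+1)) off the tubular neighborhood Sig(ε₀),
(2) φ(·,t₀) ≤ a t₀⁻¹ everywhere on K,
(3) μ(Sig(r)) ≤ C r^(2+a) for 0 < r ≤ b and μ(K) ≤ V₀,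
then ∫_K φ dμ ≤ C₈ ε₀^a ≤ C₉ t₀^(a/2), with C₈, C₉ independent of t₀. -/
theorem stmt6 {X : Type*} [MetricSpace X] [MeasurableSpace X] (μ : Measure X)
    (K : Set X) (hK : IsCompact K) (Sig : Set X) (hSigK : Sig ⊆ K)
    (a ℓ c b C C₂ V₀ : ℝ) (ha₀ : 0 < a) (ha₁ : a < 1) (hℓ : a + 1 < ℓ)
    (hc : 0 < c) (hb₀ : 0 < b) (hb₁ : b ≤ 1) (hC : 0 < C) (hC₂ : 0 < C₂) (hV₀ : 0 < V₀)
    (hvol : ∀ r : ℝ, 0 < r → r ≤ b →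
      μ (Metric.thickening r Sig) ≤ ENNReal.ofReal (C * r ^ (2 + a)))
    (hKvol : μ K ≤ ENNReal.ofReal V₀) :
    ∃ C₈ : ℝ, 0 < C₈ ∧ ∃ C₉ : ℝ, 0 < C₉ ∧
      ∀ (t₀ ε₀ : ℝ) (φ : X → ℝ), 0 < ε₀ → ε₀ ≤ b / 2 → t₀ = c * ε₀ ^ (2 : ℕ) →
        (∀ x ∈ K, 0 ≤ φ x) →
        (∀ x ∈ K, x ∉ Metric.thickening ε₀ Sig →
          φ x ≤ C₂ * t₀ ^ ℓ * Metric.infDist x Sig ^ (-(2 * (ℓ + 1)))) →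
        (∀ x ∈ K, φ x ≤ a / t₀) →
        (∫ x in K, φ x ∂μ) ≤ C₈ * ε₀ ^ a ∧ C₈ * ε₀ ^ a ≤ C₉ * t₀ ^ (a / 2) := by
  set q : ℝ := (2:ℝ) ^ (a - 2*ℓ) with hqdef
  have hq0 : 0 < q := Real.rpow_pos_of_pos two_pos _
  have hq1 : q < 1 := Real.rpow_lt_one_of_one_lt_of_neg one_lt_two (by linarith)
  set M₁ : ℝ := C₂ * C * c ^ ℓ * (2:ℝ) ^ (2+a) with hM₁def
  set M₂ : ℝ := C₂ * c ^ ℓ * V₀ * (b/2) ^ (-(2+a)) with hM₂def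
  have hM₁0 : 0 < M₁ := by positivity
  have hM₂0 : 0 < M₂ := by positivity
  set C₈ : ℝ := a*C/c + (M₁ + M₂) * (1-q)⁻¹ with hC₈def
  have hC₈0 : 0 < C₈ := by
    have h1 : 0 < a*C/c := by positivity
    have h2 : 0 < (M₁ + M₂) * (1-q)⁻¹ := by
      apply mul_pos (by positivity)
      exact inv_pos.2 (by linarith)
    rw [hC₈def]; linarith
  refine ⟨C₈, hC₈0, C₈ / c ^ (a/2), div_pos hC₈0 (Real.rpow_pos_of_pos hc _), ?_⟩
  intro t₀ ε₀ φ hε₀ hεhalf ht₀ hφ0 hφ1 hφ2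
  subst ht₀
  have hεb : ε₀ ≤ b := hεhalf.trans (by linarith)
  set f : X → ENNReal := fun x => ENNReal.ofReal (φ x) with hfdef
  set S : ℕ → Set X := fun k => Metric.thickening (2^k * ε₀) Sig with hSdef
  -- Piece 1 : on S 0 ∩ K
  have hS0 : S 0 = Metric.thickening ε₀ Sig := by simp [hSdef]
  have hpiece1 : ∫⁻ x in S 0 ∩ K, f x ∂μ ≤ ENNReal.ofReal ((a*C/c) * ε₀^a) := by
    calc ∫⁻ x in S 0 ∩ K, f x ∂μ
        ≤ ENNReal.ofReal (a / (c * ε₀^(2:ℕ))) * μ (S 0 ∩ K) :=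
          setLIntegral_le_const_mul_meas' μ _ f _
            (fun x hx => ENNReal.ofReal_le_ofReal (hφ2 x hx.2))
      _ ≤ ENNReal.ofReal (a / (c * ε₀^(2:ℕ))) * ENNReal.ofReal (C * ε₀ ^ (2+a)) := by
          refine mul_le_mul_right ?_ _
          refine le_trans (measure_mono Set.inter_subset_left) ?_
          rw [hS0]; exact hvol ε₀ hε₀ hεb
      _ = ENNReal.ofReal ((a / (c * ε₀^(2:ℕ))) * (C * ε₀ ^ (2+a))) :=
          (ENNReal.ofReal_mul (by positivity)).symm
      _ = ENNReal.ofReal ((a*C/c) * ε₀^a) := by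
          congr 1
          have he : ε₀ ^ (2+a) = ε₀^(2:ℕ) * ε₀ ^ a := by
            rw [Real.rpow_add hε₀, ← Real.rpow_natCast ε₀ 2]
            norm_num
          rw [he]
          field_simp
  -- Per-annulus bound
  have hA : ∀ k : ℕ, ∫⁻ x in (S (k+1) \ S k) ∩ K, f x ∂μ
      ≤ ENNReal.ofReal (((M₁ + M₂) * ε₀^a) * q^k) := by
    intro k
    have h2k : (0:ℝ) < 2^k * ε₀ := by positivity
    set D : ℝ := C₂ * (c * ε₀^(2:ℕ)) ^ ℓ * ((2^k * ε₀) ^ (-(2*(ℓ+1)))) with hDdef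
    have hD0 : 0 ≤ D := by positivity
    have hbound : ∀ x ∈ (S (k+1) \ S k) ∩ K, f x ≤ ENNReal.ofReal D := by
      intro x hx
      have hSig : Sig.Nonempty := by
        rcases Metric.mem_thickening_iff.1 hx.1.1 with ⟨z, hz, _⟩
        exact ⟨z, hz⟩
      have hd : 2^k * ε₀ ≤ Metric.infDist x Sig := by
        by_contra hlt
        push_neg at hlt
        exact hx.1.2 ((Metric.mem_thickening_iff_infDist_lt hSig).2 hlt)
      have hnot : x ∉ Metric.thickening ε₀ Sig := by
        intro hmem
        have h1k : ε₀ ≤ 2^k * ε₀ := by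
          have : (1:ℝ) ≤ 2^k := one_le_pow₀ (by norm_num)
          nlinarith
        exact hx.1.2 (Metric.thickening_mono h1k Sig hmem)
      have h1 := hφ1 x hx.2 hnot
      have hmono : Metric.infDist x Sig ^ (-(2*(ℓ+1))) ≤ (2^k * ε₀) ^ (-(2*(ℓ+1))) :=
        Real.rpow_le_rpow_of_nonpos h2k hd (by linarith)
      refine ENNReal.ofReal_le_ofReal (h1.trans ?_)
      rw [hDdef, mul_assoc, mul_assoc]
      refine mul_le_mul_of_nonneg_left ?_ hC₂.le
      exact mul_le_mul_of_nonneg_left hmono (by positivity)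
    have hstep := setLIntegral_le_const_mul_meas' μ ((S (k+1) \ S k) ∩ K) f _ hbound
    rcases le_or_gt (2^(k+1) * ε₀) b with hcase | hcase
    · -- use the volume bound
      have hμ : μ ((S (k+1) \ S k) ∩ K) ≤ ENNReal.ofReal (C * ((2^(k+1) * ε₀)) ^ (2+a)) := by
        refine le_trans (measure_mono ?_) (hvol (2^(k+1) * ε₀) (by positivity) hcase)
        exact fun x hx => hx.1.1
      calc ∫⁻ x in (S (k+1) \ S k) ∩ K, f x ∂μ
          ≤ ENNReal.ofReal D * ENNReal.ofReal (C * ((2^(k+1) * ε₀)) ^ (2+a)) :=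
            hstep.trans (mul_le_mul_right hμ _)
        _ = ENNReal.ofReal (D * (C * ((2^(k+1) * ε₀)) ^ (2+a))) :=
            (ENNReal.ofReal_mul hD0).symm
        _ ≤ ENNReal.ofReal (((M₁ + M₂) * ε₀^a) * q^k) := by
            refine ENNReal.ofReal_le_ofReal ?_
            have := stmt6_ineq1 a ℓ c C C₂ hc ε₀ hε₀ k
            have hpos : 0 ≤ M₂ * q^k * ε₀^a := by positivity
            rw [hDdef]
            nlinarith [this]
    · -- use the total volume bound
      have hk2 : b / 2 ≤ 2^k * ε₀ := by
        have h2 : (2:ℝ)^(k+1) = 2 * 2^k := by ring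
        rw [h2] at hcase
        linarith
      have hμ : μ ((S (k+1) \ S k) ∩ K) ≤ ENNReal.ofReal V₀ :=
        le_trans (measure_mono fun x hx => hx.2) hKvol
      calc ∫⁻ x in (S (k+1) \ S k) ∩ K, f x ∂μ
          ≤ ENNReal.ofReal D * ENNReal.ofReal V₀ := hstep.trans (mul_le_mul_right hμ _)
        _ = ENNReal.ofReal (D * V₀) := (ENNReal.ofReal_mul hD0).symm
        _ ≤ ENNReal.ofReal (((M₁ + M₂) * ε₀^a) * q^k) := by
            refine ENNReal.ofReal_le_ofReal ?_
            have := stmt6_ineq2 a ℓ c b C₂ V₀ ha₀ hc hb₀ hC₂ hV₀ ε₀ hε₀ k hk2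
            have hpos : 0 ≤ M₁ * q^k * ε₀^a := by positivity
            rw [hDdef]
            nlinarith [this]
  -- Far region : outside all thickenings
  have hpiece3 : ∫⁻ x in (⋃ k, S k)ᶜ ∩ K, f x ∂μ ≤ 0 := by
    have h0 : ∀ x ∈ (⋃ k, S k)ᶜ ∩ K, f x ≤ 0 := by
      intro x hx
      have hnotall : ∀ k, x ∉ S k := by
        intro k hk
        exact hx.1 (Set.mem_iUnion.2 ⟨k, hk⟩)
      have hnot0 : x ∉ Metric.thickening ε₀ Sig := by
        have h := hnotall 0
        rw [hSdef] at h
        simpa using h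
      have hSigE : Sig = ∅ := by
        rcases Set.eq_empty_or_nonempty Sig with h | h
        · exact h
        · exfalso
          obtain ⟨z, hz⟩ := h
          obtain ⟨n, hn⟩ := pow_unbounded_of_one_lt (dist x z / ε₀) (one_lt_two (α := ℝ))
          refine hnotall n (Metric.mem_thickening_iff.2 ⟨z, hz, ?_⟩)
          calc dist x z = dist x z / ε₀ * ε₀ := by field_simp
            _ < 2^n * ε₀ := by nlinarith
      have h1 := hφ1 x hx.2 hnot0
      rw [hSigE, Metric.infDist_empty,
        Real.zero_rpow (show -(2*(ℓ+1)) ≠ 0 by intro h; nlinarith), mul_zero] at h1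
      simpa [hfdef] using ENNReal.ofReal_eq_zero.2 h1
    calc ∫⁻ x in (⋃ k, S k)ᶜ ∩ K, f x ∂μ
        ≤ 0 * μ ((⋃ k, S k)ᶜ ∩ K) := setLIntegral_le_const_mul_meas' μ _ f 0 h0
      _ = 0 := zero_mul _
  -- Covering
  have hcover : K ⊆ (S 0 ∩ K) ∪ ((⋃ k, (S (k+1) \ S k) ∩ K) ∪ ((⋃ k, S k)ᶜ ∩ K)) := by
    intro x hx
    classical
    by_cases hxS : ∃ k, x ∈ S k
    · rcases Nat.eq_zero_or_pos (Nat.find hxS) with h0 | hpos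
      · exact Or.inl ⟨h0 ▸ Nat.find_spec hxS, hx⟩
      · obtain ⟨m, hm⟩ := Nat.exists_eq_succ_of_ne_zero hpos.ne'
        refine Or.inr (Or.inl (Set.mem_iUnion.2 ⟨m, ⟨⟨?_, ?_⟩, hx⟩⟩))
        · have := Nat.find_spec hxS
          rw [hm] at this
          exact this
        · refine Nat.find_min hxS ?_
          rw [hm]
          exact m.lt_succ_self
    · exact Or.inr (Or.inr ⟨fun hmem => hxS (Set.mem_iUnion.1 hmem), hx⟩)
  -- Summing the annuli
  have hsummable : Summable fun k : ℕ => ((M₁ + M₂) * ε₀^a) * q^k :=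
    (summable_geometric_of_lt_one hq0.le hq1).mul_left _
  have hsum : ∑' k : ℕ, ENNReal.ofReal (((M₁ + M₂) * ε₀^a) * q^k)
      = ENNReal.ofReal ((M₁ + M₂) * (1-q)⁻¹ * ε₀^a) := by
    rw [← ENNReal.ofReal_tsum_of_nonneg (fun k => by positivity) hsummable]
    congr 1
    rw [tsum_mul_left, tsum_geometric_of_lt_one hq0.le hq1]
    ring
  -- Main lintegral estimate
  have hlint : ∫⁻ x in K, f x ∂μ ≤ ENNReal.ofReal (C₈ * ε₀^a) := by
    calc ∫⁻ x in K, f x ∂μ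
        ≤ ∫⁻ x in (S 0 ∩ K) ∪ ((⋃ k, (S (k+1) \ S k) ∩ K) ∪ ((⋃ k, S k)ᶜ ∩ K)), f x ∂μ :=
          lintegral_mono_set hcover
      _ ≤ (∫⁻ x in S 0 ∩ K, f x ∂μ)
            + ((∫⁻ x in ⋃ k, (S (k+1) \ S k) ∩ K, f x ∂μ)
              + (∫⁻ x in (⋃ k, S k)ᶜ ∩ K, f x ∂μ)) :=
          le_trans (lintegral_union_le _ _ _)
            (add_le_add_right (lintegral_union_le _ _ _) _)
      _ ≤ ENNReal.ofReal ((a*C/c) * ε₀^a)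
            + (ENNReal.ofReal ((M₁ + M₂) * (1-q)⁻¹ * ε₀^a) + 0) := by
          refine add_le_add hpiece1 (add_le_add ?_ hpiece3)
          refine le_trans (lintegral_iUnion_le _ _) ?_
          rw [← hsum]
          exact ENNReal.tsum_le_tsum fun k => hA k
      _ = ENNReal.ofReal (C₈ * ε₀^a) := by
          rw [add_zero, ← ENNReal.ofReal_add (by positivity) ?h2]
          · congr 1
            rw [hC₈def]
            ring
          · have : 0 < (1-q)⁻¹ := inv_pos.2 (by linarith)
            positivity
  constructor
  · -- from lintegral to the Bochner integral
    by_cases hint : Integrable φ (μ.restrict K)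
    · rw [integral_eq_lintegral_pos_part_sub_lintegral_neg_part hint]
      refine le_trans (sub_le_self _ ENNReal.toReal_nonneg) ?_
      exact ENNReal.toReal_le_of_le_ofReal (by positivity) hlint
    · rw [integral_undef hint]
      positivity
  · -- relating ε₀^a and t₀^(a/2)
    have ht : (c * ε₀^(2:ℕ)) ^ (a/2) = c ^ (a/2) * ε₀ ^ a := by
      rw [Real.mul_rpow hc.le (by positivity), ← Real.rpow_natCast ε₀ 2,
        ← Real.rpow_mul hε₀.le]
      norm_num
      left
      congr 1
      ring
    rw [ht]
    have hcpos : (0:ℝ) < c ^ (a/2) := Real.rpow_pos_of_pos hc _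
    refine le_of_eq ?_
    field_simp
end

section
/- Let Ψ_t : M → M, t ∈ (0,T], be a family of diffeomorphisms of a compact manifold M solving ∂_t Ψ_t = Ŵ(Ψ_t(x), t) with Ψ_T = id, where Ŵ is a smooth time-dependent vector field with |Ŵ(·,t)|_h ≤ C t^{-1/2}. Then Ψ_t converges uniformly as t → 0⁺ to a continuous map Ψ₀ : M → M; moreover if ĝ(t) = Ψ_t* ĝ(T) for a fixed metric ĝ(T) and ĝ(t) → g₀ in C⁰ as t → 0 with g₀ uniformly bi-Lipschitz to ĝ(T), then Ψ₀ is a bi-Lipschitz homeomorphism (with respect to d_{ĝ(T)}). -/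
/-- Construction of the limiting homeomorphism.  On a compact metric
space X (with `dist` playing the role of d_{ĝ(T)}), let Ψ_t, t ∈ (0,T], be a family
of homeomorphisms with Ψ_T = id, solving ∂_tΨ = Ŵ(Ψ_t(x),t) with |Ŵ(·,t)| ≤ C t^(-1/2)
(expressed in integrated form).  Then Ψ_t converges uniformly as t → 0⁺ to a
continuous map Ψ₀.  Moreover, if the pulled-back distances
d_t(x,y) = d_{ĝ(T)}(Ψ_t x, Ψ_t y) converge uniformly to d₀ (the distance of g₀) and
d₀ is C-bi-Lipschitz to d_{ĝ(T)}, then Ψ₀ is a bi-Lipschitz homeomorphism. -/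
theorem stmt19 {X : Type*} [MetricSpace X] [CompactSpace X]
    (T C : ℝ) (hT : 0 < T) (hC : 1 ≤ C)
    (Ψ : ℝ → X → X) (hΨT : Ψ T = id)
    (hdiffeo : ∀ t ∈ Set.Ioc (0 : ℝ) T, Function.Bijective (Ψ t) ∧ Continuous (Ψ t))
    (hspeed : ∀ t₁ t₂ : ℝ, 0 < t₁ → t₁ ≤ t₂ → t₂ ≤ T → ∀ x : X,
      dist (Ψ t₁ x) (Ψ t₂ x) ≤ ∫ s in t₁..t₂, C * s ^ (-(1 : ℝ) / 2))
    (d : ℝ → X → X → ℝ) (d0 : X → X → ℝ)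
    (hpull : ∀ t ∈ Set.Ioc (0 : ℝ) T, ∀ x y : X, d t x y = dist (Ψ t x) (Ψ t y))
    (hconv : ∀ ε : ℝ, 0 < ε → ∃ δ : ℝ, 0 < δ ∧ ∀ t : ℝ, 0 < t → t < δ →
      ∀ x y : X, |d t x y - d0 x y| < ε)
    (hbiLip : ∀ x y : X, C⁻¹ * dist x y ≤ d0 x y ∧ d0 x y ≤ C * dist x y) :
    ∃ Ψ0 : X → X, Continuous Ψ0 ∧
      (∀ ε : ℝ, 0 < ε → ∃ δ : ℝ, 0 < δ ∧ ∀ t : ℝ, 0 < t → t < δ →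
        ∀ x : X, dist (Ψ t x) (Ψ0 x) < ε) ∧
      Function.Bijective Ψ0 ∧
      ∀ x y : X, C⁻¹ * dist x y ≤ dist (Ψ0 x) (Ψ0 y) ∧
        dist (Ψ0 x) (Ψ0 y) ≤ C * dist x y := by
  have hC0 : (0:ℝ) < C := lt_of_lt_of_le one_pos hC
  -- integrated speed bound in closed form
  have hbound : ∀ t₁ t₂ : ℝ, 0 < t₁ → t₁ ≤ t₂ → t₂ ≤ T → ∀ x : X,
      dist (Ψ t₁ x) (Ψ t₂ x) ≤ 2 * C * Real.sqrt t₂ := by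
    intro t₁ t₂ h1 h12 h2T x
    have := hspeed t₁ t₂ h1 h12 h2T x
    rw [intervalIntegral.integral_const_mul, integral_rpow (Or.inl (by norm_num))] at this
    have hs : (t₂ : ℝ) ^ (-(1:ℝ)/2 + 1) = Real.sqrt t₂ := by
      rw [Real.sqrt_eq_rpow]; norm_num
    have hs1 : (t₁ : ℝ) ^ (-(1:ℝ)/2 + 1) = Real.sqrt t₁ := by
      rw [Real.sqrt_eq_rpow]; norm_num
    rw [hs, hs1] at this
    have h01 : (0:ℝ) ≤ Real.sqrt t₁ := Real.sqrt_nonneg _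
    have heq : C * ((Real.sqrt t₂ - Real.sqrt t₁) / (-(1:ℝ)/2 + 1))
        = 2 * C * Real.sqrt t₂ - 2 * C * Real.sqrt t₁ := by norm_num; ring
    rw [heq] at this
    nlinarith [mul_nonneg hC0.le h01]
  -- approximating sequence
  set u : ℕ → ℝ := fun n => T / (n + 1) with hu
  have hupos : ∀ n, 0 < u n := fun n => div_pos hT (by positivity)
  have huleT : ∀ n, u n ≤ T := by
    intro n
    rw [hu]
    refine div_le_self hT.le ?_
    have : (0:ℝ) ≤ (n:ℝ) := Nat.cast_nonneg n
    linarith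
  have hu0 : Filter.Tendsto u Filter.atTop (nhds 0) := by
    have h : Filter.Tendsto (fun n : ℕ => ((n:ℝ) + 1)) Filter.atTop Filter.atTop :=
      Filter.tendsto_atTop_add_const_right _ 1 tendsto_natCast_atTop_atTop
    exact Filter.Tendsto.div_atTop tendsto_const_nhds h
  have hmono : ∀ {n m : ℕ}, n ≤ m → u m ≤ u n := by
    intro n m hnm
    apply div_le_div_of_nonneg_left hT.le (by positivity)
    have : (n:ℝ) ≤ (m:ℝ) := Nat.cast_le.mpr hnm
    linarith
  -- Cauchy
  have hcauchy : ∀ x : X, CauchySeq (fun n => Ψ (u n) x) := by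
    intro x
    apply cauchySeq_of_le_tendsto_0 (fun N => 2 * C * Real.sqrt (u N))
    · intro n m N hn hm
      rcases le_total n m with h | h
      · calc dist (Ψ (u n) x) (Ψ (u m) x) = dist (Ψ (u m) x) (Ψ (u n) x) := dist_comm _ _
          _ ≤ 2 * C * Real.sqrt (u n) := hbound _ _ (hupos m) (hmono h) (huleT n) x
          _ ≤ 2 * C * Real.sqrt (u N) := by
              have := Real.sqrt_le_sqrt (hmono hn)
              nlinarith
      · calc dist (Ψ (u n) x) (Ψ (u m) x) ≤ 2 * C * Real.sqrt (u m) :=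
              hbound _ _ (hupos n) (hmono h) (huleT m) x
          _ ≤ 2 * C * Real.sqrt (u N) := by
              have := Real.sqrt_le_sqrt (hmono hm)
              nlinarith
    · have : Filter.Tendsto (fun N => Real.sqrt (u N)) Filter.atTop (nhds 0) := by
        simpa [Function.comp_def] using (Real.continuous_sqrt.continuousAt.tendsto.comp hu0)
      have := this.const_mul (2 * C)
      simpa using this
  choose Ψ0 hΨ0 using fun x => cauchySeq_tendsto_of_complete (hcauchy x)
  -- uniform closeness
  have hclose : ∀ t : ℝ, 0 < t → t ≤ T → ∀ x : X,
      dist (Ψ t x) (Ψ0 x) ≤ 2 * C * Real.sqrt t := by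
    intro t ht htT x
    have hlim : Filter.Tendsto (fun n => dist (Ψ t x) (Ψ (u n) x)) Filter.atTop
        (nhds (dist (Ψ t x) (Ψ0 x))) :=
      (tendsto_const_nhds.dist (hΨ0 x))
    refine le_of_tendsto hlim ?_
    have hev : ∀ᶠ n in Filter.atTop, u n ≤ t := by
      have := hu0.eventually_le_const (by exact ht : (0:ℝ) < t)
      filter_upwards [this] with n hn using hn
    filter_upwards [hev] with n hn
    calc dist (Ψ t x) (Ψ (u n) x) = dist (Ψ (u n) x) (Ψ t x) := dist_comm _ _
      _ ≤ 2 * C * Real.sqrt t := hbound _ _ (hupos n) hn htT x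
  -- uniform convergence
  have hunif : ∀ ε : ℝ, 0 < ε → ∃ δ : ℝ, 0 < δ ∧ ∀ t : ℝ, 0 < t → t < δ →
      ∀ x : X, dist (Ψ t x) (Ψ0 x) < ε := by
    intro ε hε
    refine ⟨min T ((ε / (4 * C)) ^ 2), lt_min hT (by positivity), ?_⟩
    intro t ht htδ x
    have htT : t ≤ T := le_of_lt (lt_of_lt_of_le htδ (min_le_left _ _))
    have h2 : t ≤ (ε / (4 * C)) ^ 2 := le_of_lt (lt_of_lt_of_le htδ (min_le_right _ _))
    have hsq : Real.sqrt t ≤ ε / (4 * C) := by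
      calc Real.sqrt t ≤ Real.sqrt ((ε / (4 * C)) ^ 2) := Real.sqrt_le_sqrt h2
        _ = ε / (4 * C) := Real.sqrt_sq (by positivity)
    calc dist (Ψ t x) (Ψ0 x) ≤ 2 * C * Real.sqrt t := hclose t ht htT x
      _ ≤ 2 * C * (ε / (4 * C)) := by nlinarith
      _ = ε / 2 := by field_simp; ring
      _ < ε := by linarith
  -- distance identity
  have hdist : ∀ x y : X, dist (Ψ0 x) (Ψ0 y) = d0 x y := by
    intro x y
    have h1 : Filter.Tendsto (fun n => dist (Ψ (u n) x) (Ψ (u n) y)) Filter.atTop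
        (nhds (dist (Ψ0 x) (Ψ0 y))) := (hΨ0 x).dist (hΨ0 y)
    have h2 : Filter.Tendsto (fun n => dist (Ψ (u n) x) (Ψ (u n) y)) Filter.atTop
        (nhds (d0 x y)) := by
      rw [Metric.tendsto_atTop]
      intro ε hε
      obtain ⟨δ, hδ, hδ'⟩ := hconv ε hε
      have := hu0.eventually_lt_const hδ
      rw [Filter.eventually_atTop] at this
      obtain ⟨N, hN⟩ := this
      refine ⟨N, fun n hn => ?_⟩
      have := hδ' (u n) (hupos n) (hN n hn) x y
      rw [hpull (u n) ⟨hupos n, huleT n⟩ x y] at this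
      rwa [Real.dist_eq]
    exact tendsto_nhds_unique h1 h2
  have hbi : ∀ x y : X, C⁻¹ * dist x y ≤ dist (Ψ0 x) (Ψ0 y) ∧
      dist (Ψ0 x) (Ψ0 y) ≤ C * dist x y := by
    intro x y
    rw [hdist x y]; exact hbiLip x y
  -- continuity
  have hcont : Continuous Ψ0 := by
    rw [Metric.continuous_iff]
    intro x ε hε
    refine ⟨ε / C, by positivity, fun a ha => ?_⟩
    calc dist (Ψ0 a) (Ψ0 x) ≤ C * dist a x := (hbi a x).2
      _ < C * (ε / C) := by
          exact (mul_lt_mul_iff_right₀ hC0).mpr ha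
      _ = ε := by field_simp
  -- injective
  have hinj : Function.Injective Ψ0 := by
    intro x y hxy
    have := (hbi x y).1
    rw [hxy, dist_self] at this
    have : dist x y ≤ 0 := by
      have hCinv : (0:ℝ) < C⁻¹ := by positivity
      nlinarith
    exact dist_le_zero.mp this
  -- surjective
  have hsurj : Function.Surjective Ψ0 := by
    intro y
    have hclosed : IsClosed (Set.range Ψ0) :=
      (isCompact_range hcont).isClosed
    have : y ∈ closure (Set.range Ψ0) := by
      rw [Metric.mem_closure_iff]
      intro ε hε
      set t := min T ((ε / (4 * C)) ^ 2) with htdef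
      have ht : 0 < t := lt_min hT (by positivity)
      have htT : t ≤ T := min_le_left _ _
      obtain ⟨x, hx⟩ := (hdiffeo t ⟨ht, htT⟩).1.2 y
      refine ⟨Ψ0 x, Set.mem_range_self x, ?_⟩
      have hsq : Real.sqrt t ≤ ε / (4 * C) := by
        calc Real.sqrt t ≤ Real.sqrt ((ε / (4 * C)) ^ 2) :=
              Real.sqrt_le_sqrt (min_le_right _ _)
          _ = ε / (4 * C) := Real.sqrt_sq (by positivity)
      calc dist y (Ψ0 x) = dist (Ψ t x) (Ψ0 x) := by rw [hx]
        _ ≤ 2 * C * Real.sqrt t := hclose t ht htT x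
        _ ≤ 2 * C * (ε / (4 * C)) := by nlinarith
        _ = ε / 2 := by field_simp; ring
        _ < ε := by linarith
    rw [hclosed.closure_eq] at this
    exact this
  exact ⟨Ψ0, hcont, hunif, ⟨hinj, hsurj⟩, hbi⟩
end
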